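/- arXiv:cs/0701073 — 2 statements merged into one kernel-verified Lean document; each statement's English description precedes it below -/
import Mathlib

section
/- Let A be an n × m matrix over ℚ and let v be an index with 1 ≤ v ≤ m. Then the following are equivalent: (1) there exists a row vector b ∈ ℚⁿ such that every component of bA is nonnegative and the v-th component of bA is strictly positive; (2) there is no column vector f ∈ ℚᵐ with all components nonnegative, A f = 0, and f_v > 0. -/
/-!
The easy direction is weak duality: if `bA ≥ 0` with `(bA)_v > 0` and `f ≥ 0` with `f_v > 0`,
then `b ⬝ᵥ Af = bA ⬝ᵥ f > 0`, so `Af ≠ 0`. The other direction is Farkas' lemma applied to the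
columns of `A` and the vector `-A_v`: if no `b` exists, then `-A_v` is a nonnegative combination
`Ax` of the columns, and `f = x + e_v` is the forbidden vector.

Farkas' lemma is proved by induction on the number of generators `a_j`. If a functional `y`
separates `c` from the cone of the other generators, then `y (a_j) < 0`; projecting onto `ker y`
along `a_j` reduces to one generator fewer, and the residual of the projected solution
is a nonnegative multiple of `a_j`.
-/

open Matrix Module Finset

section Projection

variable {𝕜 M : Type*} [Field 𝕜] [AddCommGroup M] [Module 𝕜 M]

def projAlong (y : Dual 𝕜 M) (l : M) : M →ₗ[𝕜] M :=
  LinearMap.transvection (-(y l)⁻¹ • y) l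

lemma projAlong_apply (y : Dual 𝕜 M) (l u : M) : projAlong y l u = u - (y u / y l) • l := by
  simp [projAlong, LinearMap.transvection.apply, sub_eq_add_neg, div_eq_inv_mul]

lemma projAlong_self {y : Dual 𝕜 M} {l : M} (hl : y l ≠ 0) : projAlong y l l = 0 := by
  simp [projAlong_apply, div_self hl]

end Projection

section Farkas

variable {𝕜 M ι : Type*} [Field 𝕜] [LinearOrder 𝕜] [AddCommGroup M] [Module 𝕜 M]

lemma forall_dual_nonneg_projAlong [DecidableEq ι] {s : Finset ι} {j : ι} {a : ι → M} {c : M}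
    {y : Dual 𝕜 M} (hy : y (a j) ≠ 0)
    (h : ∀ f : Dual 𝕜 M, (∀ i ∈ insert j s, 0 ≤ f (a i)) → 0 ≤ f c) (f : Dual 𝕜 M)
    (hf : ∀ i ∈ s, 0 ≤ f (projAlong y (a j) (a i))) : 0 ≤ f (projAlong y (a j) c) :=
  h (f ∘ₗ projAlong y (a j)) <| forall_mem_insert _ _ _ |>.mpr
    ⟨by simp [projAlong_self hy], hf⟩

lemma exists_nonneg_sum_insert_smul_eq [DecidableEq ι] {s : Finset ι} {j : ι} (hj : j ∉ s)
    {a : ι → M} {c : M} {x : ι → 𝕜} (hx : ∀ i, 0 ≤ x i) {t : 𝕜} (ht : 0 ≤ t)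
    (hc : t • a j + ∑ i ∈ s, x i • a i = c) :
    ∃ x' : ι → 𝕜, (∀ i, 0 ≤ x' i) ∧ ∑ i ∈ insert j s, x' i • a i = c := by
  refine ⟨Function.update x j t, fun i => ?_, ?_⟩
  · rcases eq_or_ne i j with rfl | hi
    · simpa using ht
    · simpa [hi] using hx i
  · rw [sum_insert hj, Function.update_self, ← hc]
    congr 1
    exact sum_congr rfl fun i hi => by rw [Function.update_of_ne (ne_of_mem_of_not_mem hi hj)]

theorem exists_nonneg_sum_smul_eq_of_forall_dual_nonneg [IsStrictOrderedRing 𝕜] (s : Finset ι)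
    (a : ι → M) (c : M) (h : ∀ f : Dual 𝕜 M, (∀ i ∈ s, 0 ≤ f (a i)) → 0 ≤ f c) :
    ∃ x : ι → 𝕜, (∀ i, 0 ≤ x i) ∧ ∑ i ∈ s, x i • a i = c := by
  classical
  induction s using Finset.induction_on generalizing a c with
  | empty =>
    have hc : c = 0 := (forall_dual_apply_eq_zero_iff 𝕜 c).mp fun f =>
      le_antisymm (by simpa using h (-f) (by simp)) (h f (by simp))
    exact ⟨0, fun _ => le_rfl, by simp [hc]⟩
  | insert j s hj ih =>
    by_cases hs : ∀ f : Dual 𝕜 M, (∀ i ∈ s, 0 ≤ f (a i)) → 0 ≤ f c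
    · obtain ⟨x, hx, hsum⟩ := ih a c hs
      exact exists_nonneg_sum_insert_smul_eq hj hx le_rfl (by simp [hsum])
    push Not at hs
    obtain ⟨y, hya, hyc⟩ := hs
    have hyj : y (a j) < 0 := by
      by_contra! hyj
      exact hyc.not_ge (h y (forall_mem_insert _ _ _ |>.mpr ⟨hyj, hya⟩))
    obtain ⟨x, hx, hsum⟩ := ih _ _ (forall_dual_nonneg_projAlong hyj.ne h)
    set r := c - ∑ i ∈ s, x i • a i
    have hr : r = (y r / y (a j)) • a j := by
      have : projAlong y (a j) r = 0 := by simp [r, map_sum, hsum]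
      rwa [projAlong_apply, sub_eq_zero] at this
    have hyr : y r ≤ 0 := by
      have : 0 ≤ ∑ i ∈ s, x i * y (a i) := sum_nonneg fun i hi => mul_nonneg (hx i) (hya i hi)
      simp only [r, map_sub, map_sum, map_smul, smul_eq_mul]
      linarith
    exact exists_nonneg_sum_insert_smul_eq hj hx (div_nonneg_of_nonpos hyr hyj.le)
      (by rw [← hr, sub_add_cancel])

theorem Matrix.exists_nonneg_mulVec_eq_of_forall_vecMul_nonneg [IsStrictOrderedRing 𝕜]
    {m n : Type*} [Fintype m] [Fintype n] (A : Matrix m n 𝕜) (c : m → 𝕜)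
    (h : ∀ b : m → 𝕜, (∀ j, 0 ≤ (b ᵥ* A) j) → 0 ≤ b ⬝ᵥ c) :
    ∃ x : n → 𝕜, (∀ j, 0 ≤ x j) ∧ A *ᵥ x = c := by
  classical
  obtain ⟨x, hx, hsum⟩ := exists_nonneg_sum_smul_eq_of_forall_dual_nonneg univ Aᵀ c fun f hf => by
    obtain ⟨b, rfl⟩ := (dotProductEquiv 𝕜 m).surjective f
    simpa using h b fun j => (by simpa using hf j (mem_univ j) : 0 ≤ b ⬝ᵥ Aᵀ j)
  exact ⟨x, hx, by simpa [mulVec_eq_sum] using hsum⟩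

end Farkas

theorem lp_duality_characterization (n m : ℕ) (A : Matrix (Fin n) (Fin m) ℚ) (v : Fin m) :
    (∃ b : Fin n → ℚ, (∀ j, 0 ≤ Matrix.vecMul b A j) ∧ 0 < Matrix.vecMul b A v) ↔
    ¬ ∃ f : Fin m → ℚ, (∀ j, 0 ≤ f j) ∧ A.mulVec f = 0 ∧ 0 < f v := by
  constructor
  · rintro ⟨b, hb, hbv⟩ ⟨f, hf, hAf, hfv⟩
    have hpos : 0 < b ᵥ* A ⬝ᵥ f := lt_of_lt_of_le (mul_pos hbv hfv)
      (single_le_sum (fun j _ => mul_nonneg (hb j) (hf j)) (mem_univ v))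
    simp [← dotProduct_mulVec, hAf] at hpos
  · intro h
    by_contra! hno
    obtain ⟨x, hx, hAx⟩ := A.exists_nonneg_mulVec_eq_of_forall_vecMul_nonneg (-A.col v)
      fun b hb => by rw [dotProduct_neg, neg_nonneg]; exact hno b hb
    have hev : 0 ≤ (Pi.single v 1 : Fin m → ℚ) := Pi.single_nonneg.mpr zero_le_one
    refine h ⟨x + Pi.single v 1, fun j => add_nonneg (hx j) (hev j), by simp [mulVec_add, hAx],
      by simpa using add_pos_of_nonneg_of_pos (hx v) one_pos⟩
end

section
/- Let φ(f) be a Horn clause in big O equations over functions from a set S to a linearly ordered ring R, i.e., a statement of the form (⋀ᵢ qᵢ = O(rᵢ)) → s = O(t), where qᵢ, rᵢ, s, t are pointwise linear combinations involving a function variable f and other function variables. Then φ(f) holds for all functions f : S → R if and only if φ(α) and φ(−α) hold for all nonnegative functions α : S → R. -/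
/-!
Cut `S` into `P = {x | 0 ≤ f x}` and its complement. Restricting every function variable to `P`
(extending by zero) turns `f` into a nonnegative function `α`, and restricting to the complement
turns it into `-α` for a nonnegative `α`. Restriction to a piece commutes with the pointwise linear
combinations and preserves big O relations, so the hypotheses of the clause transfer to both
pieces; the two conclusions obtained there glue back with the larger of the two constants.
-/

/-- `f = g + O(h)`: there is `C : R` with `|f x - g x| ≤ C * |h x|` for all `x`. -/
def BigORel {S : Type*} {R : Type*} [Ring R] [LinearOrder R] [IsStrictOrderedRing R] (f g h : S → R) : Prop :=
  ∃ C : R, ∀ x : S, |f x - g x| ≤ C * |h x|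

/-- The value at `x` of a pointwise linear combination (with integer coefficients)
of the distinguished function variable `f` and the other function variables `V`. -/
def LinTerm {S : Type*} {R : Type*} [Ring R] [LinearOrder R] [IsStrictOrderedRing R] {ι : Type*} [Fintype ι]
    (c : ℤ) (d : ι → ℤ) (f : S → R) (V : ι → S → R) : S → R :=
  fun x => c • f x + ∑ j, d j • V j x

/-- The Horn clause `(⋀ i, qᵢ = O(rᵢ)) → s = O(t)`, where each of `qᵢ, rᵢ, s, t`
is a pointwise linear combination of `f` and the other variables `V`. -/
def HornClause {S : Type*} {R : Type*} [Ring R] [LinearOrder R] [IsStrictOrderedRing R] {ι : Type*} [Fintype ι]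
    (n : ℕ) (qc rc : Fin n → ℤ) (qd rd : Fin n → ι → ℤ) (sc tc : ℤ) (sd td : ι → ℤ)
    (f : S → R) (V : ι → S → R) : Prop :=
  (∀ i : Fin n, BigORel (LinTerm (qc i) (qd i) f V) 0 (LinTerm (rc i) (rd i) f V)) →
    BigORel (LinTerm sc sd f V) 0 (LinTerm tc td f V)

open Set

section Indicator

variable {S R : Type*} [Ring R] [LinearOrder R] [IsStrictOrderedRing R]

theorem LinTerm_indicator {ι : Type*} [Fintype ι] (s : Set S) (c : ℤ) (d : ι → ℤ)
    (f : S → R) (V : ι → S → R) :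
    LinTerm c d (s.indicator f) (fun j => s.indicator (V j)) = s.indicator (LinTerm c d f V) := by
  funext x
  by_cases hx : x ∈ s <;> simp [LinTerm, hx]

theorem BigORel.indicator {f g h : S → R} (hfgh : BigORel f g h) (s : Set S) :
    BigORel (s.indicator f) (s.indicator g) (s.indicator h) := by
  obtain ⟨C, hC⟩ := hfgh
  refine ⟨C, fun x => ?_⟩
  by_cases hx : x ∈ s
  · simpa [hx] using hC x
  · simp [hx]

theorem BigORel.of_indicator_of_indicator_compl {f g h : S → R} (s : Set S)
    (hs : BigORel (s.indicator f) (s.indicator g) (s.indicator h))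
    (hsc : BigORel (sᶜ.indicator f) (sᶜ.indicator g) (sᶜ.indicator h)) :
    BigORel f g h := by
  obtain ⟨C₁, hC₁⟩ := hs
  obtain ⟨C₂, hC₂⟩ := hsc
  refine ⟨max C₁ C₂, fun x => ?_⟩
  by_cases hx : x ∈ s
  · have hx₁ := hC₁ x
    simp only [indicator_of_mem hx] at hx₁
    exact hx₁.trans (mul_le_mul_of_nonneg_right (le_max_left _ _) (abs_nonneg _))
  · have hx₂ := hC₂ x
    simp only [indicator_of_mem (mem_compl hx)] at hx₂
    exact hx₂.trans (mul_le_mul_of_nonneg_right (le_max_right _ _) (abs_nonneg _))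

theorem HornClause.of_indicator_of_indicator_compl {ι : Type*} [Fintype ι] {n : ℕ}
    {qc rc : Fin n → ℤ} {qd rd : Fin n → ι → ℤ} {sc tc : ℤ} {sd td : ι → ℤ}
    {f : S → R} {V : ι → S → R} (s : Set S)
    (hs : HornClause n qc rc qd rd sc tc sd td (s.indicator f) (fun j => s.indicator (V j)))
    (hsc : HornClause n qc rc qd rd sc tc sd td (sᶜ.indicator f) (fun j => sᶜ.indicator (V j))) :
    HornClause n qc rc qd rd sc tc sd td f V := by
  intro hyp
  simp only [HornClause, LinTerm_indicator] at hs hsc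
  have hyp_on (t : Set S) (i : Fin n) := (hyp i).indicator t
  simp only [indicator_zero'] at hyp_on
  refine BigORel.of_indicator_of_indicator_compl s ?_ ?_
  · simpa only [indicator_zero'] using hs (hyp_on s)
  · simpa only [indicator_zero'] using hsc (hyp_on sᶜ)

end Indicator

theorem horn_clause_sign_split {S : Type*} {R : Type*} [Ring R] [LinearOrder R] [IsStrictOrderedRing R]
    {ι : Type*} [Fintype ι]
    (n : ℕ) (qc rc : Fin n → ℤ) (qd rd : Fin n → ι → ℤ) (sc tc : ℤ) (sd td : ι → ℤ) :
    (∀ (f : S → R) (V : ι → S → R), HornClause n qc rc qd rd sc tc sd td f V) ↔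
    (∀ (α : S → R) (V : ι → S → R), (∀ x, 0 ≤ α x) →
      HornClause n qc rc qd rd sc tc sd td α V ∧
      HornClause n qc rc qd rd sc tc sd td (-α) V) := by
  refine ⟨fun H α V _ => ⟨H α V, H (-α) V⟩, fun H f V => ?_⟩
  set P : Set S := {x | 0 ≤ f x}
  have hP : ∀ x, 0 ≤ P.indicator f x := indicator_nonneg fun _ hx => hx
  have hPc : ∀ x, 0 ≤ Pᶜ.indicator (-f) x :=
    indicator_nonneg fun _ hx => neg_nonneg.mpr (not_le.mp hx).le
  refine HornClause.of_indicator_of_indicator_compl P (H _ _ hP).1 ?_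
  have hneg := (H _ (fun j => Pᶜ.indicator (V j)) hPc).2
  rwa [indicator_neg', neg_neg] at hneg
end
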